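/- (Corollary 3.) Let w : [0,T) → W be a C¹ solution of the combinatorial Yamabe flow dw_i(t)/dt = B_i(w(t)). Then the function t ↦ Σ_{i=1}^n B_i(w(t))² is strictly decreasing in t; indeed (1/2) d/dt Σ_{i=1}^n B_i(w(t))² equals the sum over faces ijk ∈ F of the quadratic form (B_i,B_j,B_k) · ∂(θ^i_jk,θ^j_ki,θ^k_ij)/∂(w_i,w_j,w_k) · (B_i,B_j,B_k)ᵀ, which is strictly negative since each such Jacobian is negative definite and each B_i > 0. -/

import Mathlib

/-! Along the flow, `cosh l_ij = 2 e^{2(w_i + w_j)} cosh² (l⁰_ij / 2) - 1` moves with velocity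
`2 (cosh l_ij + 1) (B_i + B_j)`, and by the cosine law for right-angled hexagons `θ^i_jk` is an
explicit function of `cosh l_jk, cosh l_ki, cosh l_ij`. Differentiating `∑ B_i²` and regrouping
the double sum by faces gives twice a sum over faces of `vᵀ J v`, where `v = (B_i, B_j, B_k)` and
`J` is the Jacobian of the face. With `a, b, c > 1` the hyperbolic cosines of the sides, this
form times `√(a² + b² + c² + 2abc - 1) (a² - 1)(b² - 1)(c² - 1) > 0` equals
`-2 (a + 1)(b + 1)(c + 1)` times a sum of squares with positive weights, so the form is negative
definite, while `v = (B_i, B_j, B_k)` is positive. -/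

open Real Filter Set

/-- Inverse hyperbolic cosine. -/
noncomputable def arcosh (x : ℝ) : ℝ := Real.log (x + Real.sqrt (x ^ 2 - 1))

/-- The length of the side of a right-angled hyperbolic hexagon opposite the side of
length `x`, where the three pairwise non-adjacent sides have lengths `x, y, z`. -/
noncomputable def theta (x y z : ℝ) : ℝ :=
  _root_.arcosh ((Real.cosh x + Real.cosh y * Real.cosh z) / (Real.sinh y * Real.sinh z))

/-- Combinatorial data of an ideally triangulated compact surface with `n` boundary
components, together with a fixed hyperbolic metric `l⁰` assigning a positive length
to each edge.  Boundary components are indexed by `Fin n`; each face is a triple of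
pairwise distinct boundary indices; every boundary index occurs in at least one face. -/
structure IdealTriangulatedSurface (n : ℕ) where
  /-- The set of faces (ideal triangles), each recorded by the triple of boundary
  components it meets. -/
  F : Finset (Fin n × Fin n × Fin n)
  /-- The three boundary indices of a face are pairwise distinct. -/
  distinct : ∀ f ∈ F, f.1 ≠ f.2.1 ∧ f.2.1 ≠ f.2.2 ∧ f.2.2 ≠ f.1
  /-- Every boundary component meets some face. -/
  covers : ∀ i : Fin n, ∃ f ∈ F, i = f.1 ∨ i = f.2.1 ∨ i = f.2.2
  /-- The fixed hyperbolic metric: the length `l⁰_ij > 0` of the edge `ij`. -/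
  l0 : Fin n → Fin n → ℝ
  l0_symm : ∀ i j, l0 i j = l0 j i
  l0_pos : ∀ i j, 0 < l0 i j

namespace IdealTriangulatedSurface

variable {n : ℕ} (S : IdealTriangulatedSurface n)

/-- `i j` is an edge of the ideal triangulation: `i ≠ j` and some face contains
both boundary indices `i` and `j`. -/
def IsEdge (i j : Fin n) : Prop :=
  i ≠ j ∧ ∃ f ∈ S.F, (i = f.1 ∨ i = f.2.1 ∨ i = f.2.2) ∧ (j = f.1 ∨ j = f.2.1 ∨ j = f.2.2)

/-- The space `W` of combinatorial conformal factors: those `w : Fin n → ℝ` with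
`w_i + w_j > −log cosh (l⁰_ij / 2)` for every edge `ij`, i.e. those for which every
deformed edge length `l_ij(w)` is defined and positive. -/
def W : Set (Fin n → ℝ) :=
  {w | ∀ i j : Fin n, S.IsEdge i j →
    -Real.log (Real.cosh (S.l0 i j / 2)) < w i + w j}

/-- The deformed edge length `l_ij(w)`, defined by
`cosh (l_ij(w)/2) = e^{w_i + w_j} cosh (l⁰_ij/2)`. -/
noncomputable def len (w : Fin n → ℝ) (i j : Fin n) : ℝ :=
  2 * _root_.arcosh (Real.exp (w i + w j) * Real.cosh (S.l0 i j / 2))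

/-- `θ^i_jk(w)`: the length of the boundary arc on boundary component `i` of the
right-angled hexagon realizing the face `ijk` in the metric determined by `w`. -/
noncomputable def thetaF (w : Fin n → ℝ) (i j k : Fin n) : ℝ :=
  theta (S.len w j k) (S.len w k i) (S.len w i j)

/-- `B_i(w)`: the length of the boundary component `i`, the sum over all faces
containing `i` of the boundary arc `θ^i` of that face. -/
noncomputable def Blen (w : Fin n → ℝ) (i : Fin n) : ℝ :=
  ∑ f ∈ S.F,
    ((if i = f.1 then S.thetaF w f.1 f.2.1 f.2.2 else 0)
      + (if i = f.2.1 then S.thetaF w f.2.1 f.2.2 f.1 else 0)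
      + (if i = f.2.2 then S.thetaF w f.2.2 f.1 f.2.1 else 0))

end IdealTriangulatedSurface

theorem arcosh_eq_real_arcosh : _root_.arcosh = Real.arcosh := rfl

noncomputable def hexArc (a b c : ℝ) : ℝ :=
  Real.arcosh ((a + b * c) / (√(b ^ 2 - 1) * √(c ^ 2 - 1)))

noncomputable def hexArcDeriv (a b c a' b' c' : ℝ) : ℝ :=
  (a' - (a * b + c) / (b ^ 2 - 1) * b' - (a * c + b) / (c ^ 2 - 1) * c') /
    √(a ^ 2 + b ^ 2 + c ^ 2 + 2 * a * b * c - 1)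

theorem sinh_eq_sqrt_cosh_sq_sub_one {x : ℝ} (hx : 0 ≤ x) : sinh x = √(cosh x ^ 2 - 1) := by
  rw [cosh_sq, add_sub_cancel_right, Real.sqrt_sq (sinh_nonneg_iff.2 hx)]

theorem theta_eq_hexArc (x : ℝ) {y z : ℝ} (hy : 0 ≤ y) (hz : 0 ≤ z) :
    theta x y z = hexArc (cosh x) (cosh y) (cosh z) := by
  rw [theta, hexArc, arcosh_eq_real_arcosh, sinh_eq_sqrt_cosh_sq_sub_one hy,
    sinh_eq_sqrt_cosh_sq_sub_one hz]

theorem one_lt_hexArc_arg {a b c : ℝ} (ha : 1 < a) (hb : 1 < b) (hc : 1 < c) :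
    1 < (a + b * c) / (√(b ^ 2 - 1) * √(c ^ 2 - 1)) := by
  have hsqrt : ∀ {x : ℝ}, 1 < x → √(x ^ 2 - 1) < x := fun hx =>
    (Real.sqrt_lt' (by linarith)).2 (by linarith)
  rw [one_lt_div (mul_pos (Real.sqrt_pos.2 (by nlinarith)) (Real.sqrt_pos.2 (by nlinarith)))]
  have := mul_lt_mul'' (hsqrt hb) (hsqrt hc) (Real.sqrt_nonneg _) (Real.sqrt_nonneg _)
  nlinarith

theorem hexArc_disc_pos {a b c : ℝ} (ha : 1 < a) (hb : 1 < b) (hc : 1 < c) :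
    0 < a ^ 2 + b ^ 2 + c ^ 2 + 2 * a * b * c - 1 := by
  have : 1 < a * b * c := one_lt_mul_of_lt_of_le (one_lt_mul ha.le hb) hc.le
  nlinarith

theorem hexArc_pos {a b c : ℝ} (ha : 1 < a) (hb : 1 < b) (hc : 1 < c) : 0 < hexArc a b c :=
  Real.arcosh_pos (one_lt_hexArc_arg ha hb hc)

theorem HasDerivWithinAt.hexArc {P Q R : ℝ → ℝ} {P' Q' R' : ℝ} {s : Set ℝ} {t : ℝ}
    (hP : HasDerivWithinAt P P' s t) (hQ : HasDerivWithinAt Q Q' s t)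
    (hR : HasDerivWithinAt R R' s t) (hP1 : 1 < P t) (hQ1 : 1 < Q t) (hR1 : 1 < R t) :
    HasDerivWithinAt (fun τ => _root_.hexArc (P τ) (Q τ) (R τ))
      (hexArcDeriv (P t) (Q t) (R t) P' Q' R') s t := by
  have hb : 0 < Q t ^ 2 - 1 := by nlinarith
  have hc : 0 < R t ^ 2 - 1 := by nlinarith
  have hΔ := hexArc_disc_pos hP1 hQ1 hR1
  have hg := (hP.add (hQ.mul hR)).div
    ((((hQ.pow 2).sub_const 1).sqrt hb.ne').mul (((hR.pow 2).sub_const 1).sqrt hc.ne'))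
    (mul_pos (Real.sqrt_pos.2 hb) (Real.sqrt_pos.2 hc)).ne'
  refine ((Real.hasDerivAt_arcosh (one_lt_hexArc_arg hP1 hQ1 hR1)).comp_hasDerivWithinAt t
    hg).congr_deriv ?_
  simp only [Pi.add_apply, Pi.mul_apply, Pi.pow_apply]
  set u := √(Q t ^ 2 - 1)
  set v := √(R t ^ 2 - 1)
  set w := √(P t ^ 2 + Q t ^ 2 + R t ^ 2 + 2 * P t * Q t * R t - 1) with hw
  have hu2 : u ^ 2 = Q t ^ 2 - 1 := Real.sq_sqrt hb.le
  have hv2 : v ^ 2 = R t ^ 2 - 1 := Real.sq_sqrt hc.le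
  have hw2 : w ^ 2 = P t ^ 2 + Q t ^ 2 + R t ^ 2 + 2 * P t * Q t * R t - 1 := Real.sq_sqrt hΔ.le
  have hu0 : 0 < u := Real.sqrt_pos.2 hb
  have hv0 : 0 < v := Real.sqrt_pos.2 hc
  have hw0 : 0 < w := Real.sqrt_pos.2 hΔ
  have hroot : √(((P t + Q t * R t) / (u * v)) ^ 2 - 1) = w / (u * v) := by
    rw [Real.sqrt_eq_iff_mul_self_eq_of_pos (by positivity)]
    field_simp
    nlinarith
  rw [hroot, hexArcDeriv, ← hw, ← hu2, ← hv2]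
  field_simp
  linear_combination (2 * u ^ 2 * Q t * R') * hv2 + (2 * v ^ 2 * Q' * R t) * hu2

-- `vᵀ J v` for the Jacobian `J = ∂(θ^i, θ^j, θ^k)/∂(w_i, w_j, w_k)` of a face whose sides
-- opposite `i, j, k` have hyperbolic cosines `a, b, c`.
noncomputable def faceForm (a b c v₁ v₂ v₃ : ℝ) : ℝ :=
  v₁ * hexArcDeriv a b c
      (2 * (a + 1) * (v₂ + v₃)) (2 * (b + 1) * (v₃ + v₁)) (2 * (c + 1) * (v₁ + v₂))
    + v₂ * hexArcDeriv b c a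
      (2 * (b + 1) * (v₃ + v₁)) (2 * (c + 1) * (v₁ + v₂)) (2 * (a + 1) * (v₂ + v₃))
    + v₃ * hexArcDeriv c a b
      (2 * (c + 1) * (v₁ + v₂)) (2 * (a + 1) * (v₂ + v₃)) (2 * (b + 1) * (v₃ + v₁))

theorem faceForm_mul_eq {a b c : ℝ} (ha : 1 < a) (hb : 1 < b) (hc : 1 < c) (v₁ v₂ v₃ : ℝ) :
    faceForm a b c v₁ v₂ v₃ * (√(a ^ 2 + b ^ 2 + c ^ 2 + 2 * a * b * c - 1) *
      ((a ^ 2 - 1) * (b ^ 2 - 1) * (c ^ 2 - 1))) =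
    -(2 * (a + 1) * (b + 1) * (c + 1) *
      ((a + b) * (a - 1) * (b - 1) * (v₁ + v₂) ^ 2 + (a + c) * (a - 1) * (c - 1) * (v₁ + v₃) ^ 2
        + (b + c) * (b - 1) * (c - 1) * (v₂ + v₃) ^ 2
        + (a - 1) * (b - 1) * (c - 1) * ((v₁ - v₂) ^ 2 + (v₁ - v₃) ^ 2 + (v₂ - v₃) ^ 2)
        + 2 * (a - 1) * (b - 1) * (c - 1) *
          ((a - 1) * v₁ ^ 2 + (b - 1) * v₂ ^ 2 + (c - 1) * v₃ ^ 2))) := by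
  have hw0 := Real.sqrt_pos.2 (hexArc_disc_pos ha hb hc)
  have ha2 : a ^ 2 - 1 ≠ 0 := by nlinarith
  have hb2 : b ^ 2 - 1 ≠ 0 := by nlinarith
  have hc2 : c ^ 2 - 1 ≠ 0 := by nlinarith
  have hbca : b ^ 2 + c ^ 2 + a ^ 2 + 2 * b * c * a - 1 =
      a ^ 2 + b ^ 2 + c ^ 2 + 2 * a * b * c - 1 := by ring
  have hcab : c ^ 2 + a ^ 2 + b ^ 2 + 2 * c * a * b - 1 =
      a ^ 2 + b ^ 2 + c ^ 2 + 2 * a * b * c - 1 := by ring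
  rw [faceForm, hexArcDeriv, hexArcDeriv, hexArcDeriv, hbca, hcab]
  field_simp
  ring

theorem faceForm_neg {a b c v₁ v₂ v₃ : ℝ} (ha : 1 < a) (hb : 1 < b) (hc : 1 < c)
    (hv : (v₁, v₂, v₃) ≠ 0) : faceForm a b c v₁ v₂ v₃ < 0 := by
  have ha1 : 0 < a - 1 := sub_pos.2 ha
  have hb1 : 0 < b - 1 := sub_pos.2 hb
  have hc1 : 0 < c - 1 := sub_pos.2 hc
  have hdiag : 0 < (a - 1) * v₁ ^ 2 + (b - 1) * v₂ ^ 2 + (c - 1) * v₃ ^ 2 := by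
    have h₁ := mul_nonneg ha1.le (sq_nonneg v₁)
    have h₂ := mul_nonneg hb1.le (sq_nonneg v₂)
    have h₃ := mul_nonneg hc1.le (sq_nonneg v₃)
    have : v₁ ≠ 0 ∨ v₂ ≠ 0 ∨ v₃ ≠ 0 := by
      by_contra! h
      obtain ⟨rfl, rfl, rfl⟩ := h
      exact hv rfl
    rcases this with h | h | h
    · linarith [mul_pos ha1 (sq_pos_of_ne_zero h)]
    · linarith [mul_pos hb1 (sq_pos_of_ne_zero h)]
    · linarith [mul_pos hc1 (sq_pos_of_ne_zero h)]
  have hsos : 0 < (a + b) * (a - 1) * (b - 1) * (v₁ + v₂) ^ 2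
      + (a + c) * (a - 1) * (c - 1) * (v₁ + v₃) ^ 2 + (b + c) * (b - 1) * (c - 1) * (v₂ + v₃) ^ 2
      + (a - 1) * (b - 1) * (c - 1) * ((v₁ - v₂) ^ 2 + (v₁ - v₃) ^ 2 + (v₂ - v₃) ^ 2)
      + 2 * (a - 1) * (b - 1) * (c - 1) *
        ((a - 1) * v₁ ^ 2 + (b - 1) * v₂ ^ 2 + (c - 1) * v₃ ^ 2) := by
    have habc := mul_pos (mul_pos ha1 hb1) hc1
    have := mul_nonneg (mul_pos (mul_pos (by linarith : 0 < a + b) ha1) hb1).le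
      (sq_nonneg (v₁ + v₂))
    have := mul_nonneg (mul_pos (mul_pos (by linarith : 0 < a + c) ha1) hc1).le
      (sq_nonneg (v₁ + v₃))
    have := mul_nonneg (mul_pos (mul_pos (by linarith : 0 < b + c) hb1) hc1).le
      (sq_nonneg (v₂ + v₃))
    have := mul_nonneg habc.le
      (by positivity : 0 ≤ (v₁ - v₂) ^ 2 + (v₁ - v₃) ^ 2 + (v₂ - v₃) ^ 2)
    have := mul_pos habc hdiag
    linarith
  have hM : 0 < √(a ^ 2 + b ^ 2 + c ^ 2 + 2 * a * b * c - 1) *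
      ((a ^ 2 - 1) * (b ^ 2 - 1) * (c ^ 2 - 1)) := by
    have := Real.sqrt_pos.2 (hexArc_disc_pos ha hb hc)
    have : 0 < a ^ 2 - 1 := by nlinarith
    have : 0 < b ^ 2 - 1 := by nlinarith
    have : 0 < c ^ 2 - 1 := by nlinarith
    positivity
  refine neg_of_mul_neg_left ?_ hM.le
  rw [faceForm_mul_eq ha hb hc, neg_neg_iff_pos]
  have : 0 < 2 * (a + 1) * (b + 1) * (c + 1) := by
    have : 0 < a + 1 := by linarith
    have : 0 < b + 1 := by linarith
    have : 0 < c + 1 := by linarith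
    positivity
  positivity

theorem strictAntiOn_of_forall_hasDerivWithinAt_neg {D : Set ℝ} (hD : Convex ℝ D) {f : ℝ → ℝ}
    (hf : ∀ x ∈ D, ∃ d < 0, HasDerivWithinAt f d D x) : StrictAntiOn f D := by
  refine strictAntiOn_of_deriv_neg hD
    (fun x hx => (hf x hx).choose_spec.2.continuousWithinAt) fun x hx => ?_
  obtain ⟨d, hd, hfd⟩ := hf x (interior_subset hx)
  rwa [(hfd.hasDerivAt (mem_interior_iff_mem_nhds.1 hx)).deriv]

section CornerSum

variable {α : Type*} [DecidableEq α]

def cornerSum (F : Finset (α × α × α)) (x : α → α → α → ℝ) (i : α) : ℝ :=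
  ∑ f ∈ F, ((if i = f.1 then x f.1 f.2.1 f.2.2 else 0)
    + (if i = f.2.1 then x f.2.1 f.2.2 f.1 else 0)
    + (if i = f.2.2 then x f.2.2 f.1 f.2.1 else 0))

theorem sum_mul_cornerSum [Fintype α] (F : Finset (α × α × α)) (x : α → α → α → ℝ)
    (g : α → ℝ) :
    ∑ i, g i * cornerSum F x i =
      ∑ f ∈ F, (g f.1 * x f.1 f.2.1 f.2.2 + g f.2.1 * x f.2.1 f.2.2 f.1
        + g f.2.2 * x f.2.2 f.1 f.2.1) := by
  simp only [cornerSum, Finset.mul_sum]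
  rw [Finset.sum_comm]
  refine Finset.sum_congr rfl fun f _ => ?_
  simp only [mul_add, Finset.sum_add_distrib, mul_ite, mul_zero, Finset.sum_ite_eq',
    Finset.mem_univ, if_true]

theorem cornerSum_pos {F : Finset (α × α × α)} {x : α → α → α → ℝ} {i : α}
    (hx : ∀ f ∈ F, 0 < x f.1 f.2.1 f.2.2 ∧ 0 < x f.2.1 f.2.2 f.1 ∧ 0 < x f.2.2 f.1 f.2.1)
    (hi : ∃ f ∈ F, i = f.1 ∨ i = f.2.1 ∨ i = f.2.2) : 0 < cornerSum F x i := by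
  have hterm : ∀ f ∈ F, 0 ≤ (if i = f.1 then x f.1 f.2.1 f.2.2 else 0)
      + (if i = f.2.1 then x f.2.1 f.2.2 f.1 else 0)
      + (if i = f.2.2 then x f.2.2 f.1 f.2.1 else 0) := by
    intro f hf
    obtain ⟨h₁, h₂, h₃⟩ := hx f hf
    split_ifs <;> positivity
  obtain ⟨f, hf, hif⟩ := hi
  refine Finset.sum_pos' hterm ⟨f, hf, ?_⟩
  obtain ⟨h₁, h₂, h₃⟩ := hx f hf
  rcases hif with h | h | h <;> split_ifs <;> positivity

theorem HasDerivWithinAt.cornerSum {F : Finset (α × α × α)} {x : ℝ → α → α → α → ℝ}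
    {x' : α → α → α → ℝ} {s : Set ℝ} {t : ℝ}
    (hx : ∀ f ∈ F, HasDerivWithinAt (fun τ => x τ f.1 f.2.1 f.2.2) (x' f.1 f.2.1 f.2.2) s t ∧
      HasDerivWithinAt (fun τ => x τ f.2.1 f.2.2 f.1) (x' f.2.1 f.2.2 f.1) s t ∧
      HasDerivWithinAt (fun τ => x τ f.2.2 f.1 f.2.1) (x' f.2.2 f.1 f.2.1) s t) (i : α) :
    HasDerivWithinAt (fun τ => _root_.cornerSum F (x τ) i) (_root_.cornerSum F x' i) s t := by
  refine HasDerivWithinAt.fun_sum fun f hf => ?_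
  obtain ⟨h₁, h₂, h₃⟩ := hx f hf
  have hite : ∀ {p : Prop} [Decidable p] {y : ℝ → ℝ} {y' : ℝ}, HasDerivWithinAt y y' s t →
      HasDerivWithinAt (fun τ => if p then y τ else 0) (if p then y' else 0) s t := by
    intro p _ y y' hy
    split_ifs
    exacts [hy, hasDerivWithinAt_const t s 0]
  exact ((hite h₁).add (hite h₂)).add (hite h₃)

end CornerSum

namespace IdealTriangulatedSurface

variable {n : ℕ} (S : IdealTriangulatedSurface n)

noncomputable def coshLen (u : Fin n → ℝ) (i j : Fin n) : ℝ :=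
  2 * (exp (u i + u j) * cosh (S.l0 i j / 2)) ^ 2 - 1

theorem Blen_eq_cornerSum (u : Fin n → ℝ) : S.Blen u = cornerSum S.F (S.thetaF u) := rfl

theorem isEdge_of_mem_F {f : Fin n × Fin n × Fin n} (hf : f ∈ S.F) :
    S.IsEdge f.1 f.2.1 ∧ S.IsEdge f.2.1 f.2.2 ∧ S.IsEdge f.2.2 f.1 := by
  obtain ⟨d₁, d₂, d₃⟩ := S.distinct f hf
  exact ⟨⟨d₁, f, hf, by simp⟩, ⟨d₂, f, hf, by simp⟩, ⟨d₃, f, hf, by simp⟩⟩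

variable {S}

theorem one_lt_exp_mul_cosh {u : Fin n → ℝ} (hu : u ∈ S.W) {i j : Fin n} (h : S.IsEdge i j) :
    1 < exp (u i + u j) * cosh (S.l0 i j / 2) := by
  have := exp_lt_exp.2 (hu i j h)
  rwa [exp_neg, exp_log (cosh_pos _), inv_lt_iff_one_lt_mul₀ (cosh_pos _)] at this

theorem one_lt_coshLen {u : Fin n → ℝ} (hu : u ∈ S.W) {i j : Fin n} (h : S.IsEdge i j) :
    1 < S.coshLen u i j := by
  have := one_lt_exp_mul_cosh hu h
  rw [coshLen]
  nlinarith

theorem len_nonneg {u : Fin n → ℝ} (hu : u ∈ S.W) {i j : Fin n} (h : S.IsEdge i j) :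
    0 ≤ S.len u i j :=
  mul_nonneg zero_le_two (Real.arcosh_nonneg (one_lt_exp_mul_cosh hu h).le)

theorem cosh_len {u : Fin n → ℝ} (hu : u ∈ S.W) {i j : Fin n} (h : S.IsEdge i j) :
    cosh (S.len u i j) = S.coshLen u i j := by
  rw [len, arcosh_eq_real_arcosh, cosh_two_mul, sinh_sq,
    Real.cosh_arcosh (one_lt_exp_mul_cosh hu h).le, coshLen]
  ring

theorem thetaF_eq_hexArc {u : Fin n → ℝ} (hu : u ∈ S.W) {i j k : Fin n} (hjk : S.IsEdge j k)
    (hki : S.IsEdge k i) (hij : S.IsEdge i j) :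
    S.thetaF u i j k = hexArc (S.coshLen u j k) (S.coshLen u k i) (S.coshLen u i j) := by
  rw [thetaF, theta_eq_hexArc _ (len_nonneg hu hki) (len_nonneg hu hij), cosh_len hu hjk,
    cosh_len hu hki, cosh_len hu hij]

theorem Blen_pos {u : Fin n → ℝ} (hu : u ∈ S.W) (i : Fin n) : 0 < S.Blen u i := by
  rw [Blen_eq_cornerSum]
  refine cornerSum_pos (fun f hf => ?_) (S.covers i)
  obtain ⟨e₁, e₂, e₃⟩ := S.isEdge_of_mem_F hf
  have c₁ := one_lt_coshLen hu e₁
  have c₂ := one_lt_coshLen hu e₂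
  have c₃ := one_lt_coshLen hu e₃
  simp only [thetaF_eq_hexArc hu, e₁, e₂, e₃]
  exact ⟨hexArc_pos c₂ c₃ c₁, hexArc_pos c₃ c₁ c₂, hexArc_pos c₁ c₂ c₃⟩

noncomputable def thetaDeriv (u v : Fin n → ℝ) (i j k : Fin n) : ℝ :=
  hexArcDeriv (S.coshLen u j k) (S.coshLen u k i) (S.coshLen u i j)
    (2 * (S.coshLen u j k + 1) * (v j + v k)) (2 * (S.coshLen u k i + 1) * (v k + v i))
    (2 * (S.coshLen u i j + 1) * (v i + v j))

noncomputable def blenFaceForm (u : Fin n → ℝ) (f : Fin n × Fin n × Fin n) : ℝ :=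
  faceForm (S.coshLen u f.2.1 f.2.2) (S.coshLen u f.2.2 f.1) (S.coshLen u f.1 f.2.1)
    (S.Blen u f.1) (S.Blen u f.2.1) (S.Blen u f.2.2)

section Curve

variable {w : ℝ → Fin n → ℝ} {w' : Fin n → ℝ} {s : Set ℝ} {t : ℝ}

theorem hasDerivWithinAt_coshLen {i j : Fin n}
    (hi : HasDerivWithinAt (fun τ => w τ i) (w' i) s t)
    (hj : HasDerivWithinAt (fun τ => w τ j) (w' j) s t) :
    HasDerivWithinAt (fun τ => S.coshLen (w τ) i j)
      (2 * (S.coshLen (w t) i j + 1) * (w' i + w' j)) s t := by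
  refine ((((hi.add hj).exp.mul_const (cosh (S.l0 i j / 2))).pow 2).const_mul 2
    |>.sub_const 1).congr_deriv ?_
  simp only [coshLen, Pi.add_apply]
  ring

theorem hasDerivWithinAt_thetaF (hW : ∀ τ ∈ s, w τ ∈ S.W) (ht : t ∈ s)
    (hw : ∀ i, HasDerivWithinAt (fun τ => w τ i) (w' i) s t) {i j k : Fin n}
    (hjk : S.IsEdge j k) (hki : S.IsEdge k i) (hij : S.IsEdge i j) :
    HasDerivWithinAt (fun τ => S.thetaF (w τ) i j k) (S.thetaDeriv (w t) w' i j k) s t :=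
  ((hasDerivWithinAt_coshLen (hw j) (hw k)).hexArc (hasDerivWithinAt_coshLen (hw k) (hw i))
      (hasDerivWithinAt_coshLen (hw i) (hw j)) (one_lt_coshLen (hW t ht) hjk)
      (one_lt_coshLen (hW t ht) hki) (one_lt_coshLen (hW t ht) hij)).congr
    (fun τ hτ => thetaF_eq_hexArc (hW τ hτ) hjk hki hij) (thetaF_eq_hexArc (hW t ht) hjk hki hij)

theorem hasDerivWithinAt_Blen (hW : ∀ τ ∈ s, w τ ∈ S.W) (ht : t ∈ s)
    (hw : ∀ i, HasDerivWithinAt (fun τ => w τ i) (w' i) s t) (i : Fin n) :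
    HasDerivWithinAt (fun τ => S.Blen (w τ) i) (cornerSum S.F (S.thetaDeriv (w t) w') i) s t := by
  simp only [Blen_eq_cornerSum]
  exact HasDerivWithinAt.cornerSum (fun _ hf =>
    let ⟨e₁, e₂, e₃⟩ := S.isEdge_of_mem_F hf
    ⟨hasDerivWithinAt_thetaF hW ht hw e₂ e₃ e₁, hasDerivWithinAt_thetaF hW ht hw e₃ e₁ e₂,
      hasDerivWithinAt_thetaF hW ht hw e₁ e₂ e₃⟩) i

theorem hasDerivWithinAt_sum_sq_Blen (hW : ∀ τ ∈ s, w τ ∈ S.W) (ht : t ∈ s)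
    (hflow : ∀ i, HasDerivWithinAt (fun τ => w τ i) (S.Blen (w t) i) s t) :
    HasDerivWithinAt (fun τ => ∑ i, S.Blen (w τ) i ^ 2)
      (2 * ∑ f ∈ S.F, S.blenFaceForm (w t) f) s t := by
  refine (HasDerivWithinAt.fun_sum fun i _ =>
    (hasDerivWithinAt_Blen hW ht hflow i).fun_pow 2).congr_deriv ?_
  simp only [Nat.cast_ofNat, Nat.reduceSub, pow_one, mul_assoc, ← Finset.mul_sum,
    sum_mul_cornerSum]
  rfl

end Curve

theorem blenFaceForm_neg {u : Fin n → ℝ} (hu : u ∈ S.W) {f : Fin n × Fin n × Fin n}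
    (hf : f ∈ S.F) : S.blenFaceForm u f < 0 := by
  obtain ⟨e₁, e₂, e₃⟩ := S.isEdge_of_mem_F hf
  refine faceForm_neg (one_lt_coshLen hu e₂) (one_lt_coshLen hu e₃) (one_lt_coshLen hu e₁) ?_
  intro h
  exact (Blen_pos hu f.1).ne' (congrArg Prod.fst h)

end IdealTriangulatedSurface

/-- Corollary 3: along any `C¹` solution `w : [0,T) → W` of the
combinatorial Yamabe flow `dw_i/dt = B_i(w(t))`, the quantity `∑_{i=1}^n B_i(w(t))²`
is strictly decreasing; indeed `(1/2) d/dt ∑ B_i²` equals a strictly negative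
quantity (a sum over faces of values of negative definite quadratic forms at the
positive vector of boundary lengths). -/
theorem stmt_14 {n : ℕ} (hn : 1 ≤ n) (S : IdealTriangulatedSurface n)
    (T : ℝ) (w : ℝ → (Fin n → ℝ))
    (hmem : ∀ t ∈ Set.Ico (0 : ℝ) T, w t ∈ S.W)
    (hflow : ∀ t ∈ Set.Ico (0 : ℝ) T, ∀ i : Fin n,
      HasDerivWithinAt (fun s => w s i) (S.Blen (w t) i) (Set.Ico 0 T) t) :
    StrictAntiOn (fun t => ∑ i, (S.Blen (w t) i) ^ 2) (Set.Ico 0 T) ∧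
    ∀ t ∈ Set.Ico (0 : ℝ) T, ∃ D : ℝ, D < 0 ∧
      HasDerivWithinAt (fun s => (1 / 2) * ∑ i, (S.Blen (w s) i) ^ 2) D
        (Set.Ico 0 T) t := by
  obtain ⟨f₀, hf₀, -⟩ := S.covers ⟨0, hn⟩
  have hneg : ∀ t ∈ Set.Ico (0 : ℝ) T, ∑ f ∈ S.F, S.blenFaceForm (w t) f < 0 := fun t ht =>
    Finset.sum_neg (fun _ hf => IdealTriangulatedSurface.blenFaceForm_neg (hmem t ht) hf)
      ⟨f₀, hf₀⟩
  have hderiv := fun t ht =>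
    IdealTriangulatedSurface.hasDerivWithinAt_sum_sq_Blen hmem ht (hflow t ht)
  refine ⟨strictAntiOn_of_forall_hasDerivWithinAt_neg (convex_Ico 0 T) fun t ht =>
    ⟨_, by linarith [hneg t ht], hderiv t ht⟩, fun t ht =>
    ⟨_, hneg t ht, ((hderiv t ht).const_mul (1 / 2)).congr_deriv (by ring)⟩⟩
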